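/- arXiv:1301.4587 — 2 statements merged into one kernel-verified Lean document; each statement's English description precedes it below -/
import Mathlib

section
/- Let p be a prime, n ≥ 1 with p not dividing n, and A a row-stochastic n×n matrix over F_p = ZMod p. Then the following are equivalent: (i) the iteration x(t+1) = A x(t) achieves average consensus, i.e., for every x(0) ∈ F_p^n there exists T such that A^t x(0) = ((n : F_p)⁻¹ · ∑_i x(0)_i) • 𝟙 for all t ≥ T; (ii) the characteristic polynomial of A over F_p equals X^{n−1}·(X − 1) and A is column-stochastic, i.e., 𝟙ᵀ A = 𝟙ᵀ (every column of A sums to 1). -/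
open Matrix Polynomial Filter

/-!
Consensus says that the powers of `A` are eventually the averaging matrix `J = n⁻¹ 𝟙 𝟙ᵀ`, of
rank one. For `t ≥ n` the kernel of `Aᵗ` is the generalized `0`-eigenspace of `A`, whose
dimension is the multiplicity of `0` as a root of `charpoly A`; hence
`rank Aᵗ + natTrailingDegree (charpoly A) = n`. If `Aᵗ = J`, the trailing degree is at least
`n - 1` and `1` is a root (`A 𝟙 = 𝟙`), which forces `charpoly A = X ^ (n - 1) * (X - 1)`, while
`𝟙ᵀ A = 𝟙ᵀ J A = 𝟙ᵀ Aᵗ⁺¹ = 𝟙ᵀ`. Conversely, that characteristic polynomial gives `rank Aᵗ = 1`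
for `t ≥ n`, so the range of `Aᵗ` is spanned by `𝟙 = Aᵗ 𝟙`, and `𝟙ᵀ Aᵗ = 𝟙ᵀ` makes the scalar
multiple of `𝟙` equal to the average.
-/

theorem Polynomial.eq_X_pow_mul_X_sub_one {R : Type*} [CommRing R] [Nontrivial R] {f : R[X]}
    {n : ℕ} (hf : f.Monic) (hdeg : f.natDegree = n + 1) (htrail : n ≤ f.natTrailingDegree)
    (hroot : f.IsRoot 1) : f = X ^ n * (X - 1) := by
  obtain ⟨g, rfl⟩ : X ^ n ∣ f := X_pow_dvd_iff.2 fun d hd =>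
    coeff_eq_zero_of_lt_natTrailingDegree (hd.trans_le htrail)
  have hg : g.Monic := (monic_X_pow n).of_mul_monic_left hf
  have hg1 : g.natDegree = 1 := by
    rw [(monic_X_pow n).natDegree_mul hg, natDegree_X_pow] at hdeg
    omega
  rw [hg.eq_X_add_C hg1] at hroot ⊢
  have hc : g.coeff 0 = -1 := by
    simpa [eq_neg_iff_add_eq_zero, add_comm] using hroot
  rw [hc, C_neg, C_1, ← sub_eq_add_neg]

theorem LinearMap.finrank_ker_pow_eq_natTrailingDegree_charpoly {K V : Type*} [Field K]
    [AddCommGroup V] [Module K V] [FiniteDimensional K V] (f : Module.End K V) {t : ℕ}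
    (ht : Module.finrank K V ≤ t) :
    Module.finrank K (LinearMap.ker (f ^ t)) = f.charpoly.natTrailingDegree := by
  rw [← LinearMap.finrank_maxGenEigenspace_zero_eq,
    Module.End.maxGenEigenspace_eq_genEigenspace_finrank,
    ← Module.End.genEigenspace_eq_genEigenspace_finrank_of_le _ _ ht,
    Module.End.genEigenspace_nat, zero_smul, sub_zero]

namespace Matrix

theorem forall_eventually_mulVec_eq_iff {α m n R : Type*} [Fintype n] [DecidableEq n]
    [NonAssocSemiring R] {l : Filter α} {M : α → Matrix m n R} {N : Matrix m n R} :
    (∀ x, ∀ᶠ a in l, M a *ᵥ x = N *ᵥ x) ↔ ∀ᶠ a in l, M a = N :=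
  ⟨fun h => (eventually_all.2 fun j => h (Pi.single j 1)).mono
      fun _ ha => ext_of_mulVec_single ha,
    fun h _ => h.mono fun _ ha => by rw [ha]⟩

theorem pow_mulVec_eq_self {ι R : Type*} [Fintype ι] [DecidableEq ι] [Semiring R]
    {M : Matrix ι ι R} {v : ι → R} (h : M *ᵥ v = v) (k : ℕ) :
    M ^ k *ᵥ v = v := by
  induction k with
  | zero => simp
  | succ k ih => rw [pow_succ, ← mulVec_mulVec, h, ih]

theorem vecMul_pow_eq_self {ι R : Type*} [Fintype ι] [DecidableEq ι] [Semiring R]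
    {M : Matrix ι ι R} {v : ι → R} (h : v ᵥ* M = v) (k : ℕ) :
    v ᵥ* M ^ k = v := by
  induction k with
  | zero => simp
  | succ k ih => rw [pow_succ, ← vecMul_vecMul, ih, h]

variable {ι K : Type*} [Fintype ι] [Field K]

variable (ι K) in
def averagingMatrix : Matrix ι ι K :=
  of fun _ _ => (Fintype.card ι : K)⁻¹

theorem averagingMatrix_mulVec (x : ι → K) :
    averagingMatrix ι K *ᵥ x = ((Fintype.card ι : K)⁻¹ * ∑ i, x i) • 1 := by
  ext
  simp [averagingMatrix, mulVec, dotProduct, Finset.mul_sum]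

theorem one_vecMul_averagingMatrix (hn : (Fintype.card ι : K) ≠ 0) :
    1 ᵥ* averagingMatrix ι K = 1 := by
  ext
  simp [averagingMatrix, vecMul, dotProduct, hn]

theorem rank_averagingMatrix_le_one : (averagingMatrix ι K).rank ≤ 1 := by
  have : averagingMatrix ι K = vecMulVec (fun _ => (Fintype.card ι : K)⁻¹) 1 := by
    ext
    simp [averagingMatrix, vecMulVec]
  exact this ▸ rank_vecMulVec_le _ _

variable [DecidableEq ι]

theorem rank_pow_add_natTrailingDegree_charpoly (M : Matrix ι ι K) {t : ℕ}
    (ht : Fintype.card ι ≤ t) :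
    (M ^ t).rank + M.charpoly.natTrailingDegree = Fintype.card ι := by
  rw [← charpoly_toLin', ← (toLin' M).finrank_ker_pow_eq_natTrailingDegree_charpoly
    (by simpa using ht), ← toLin'_pow, toLin'_apply', rank,
    LinearMap.finrank_range_add_finrank_ker, Module.finrank_fintype_fun_eq_card]

theorem isRoot_charpoly_of_mulVec_eq_smul {M : Matrix ι ι K} {v : ι → K} {μ : K}
    (hv : v ≠ 0) (h : M *ᵥ v = μ • v) : M.charpoly.IsRoot μ := by
  rw [← charpoly_toLin', ← Module.End.hasEigenvalue_iff_isRoot_charpoly]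
  exact Module.End.hasEigenvalue_of_hasEigenvector ⟨Module.End.mem_eigenspace_iff.2 h, hv⟩

theorem eq_averagingMatrix_of_rank_le_one (hn : (Fintype.card ι : K) ≠ 0)
    {M : Matrix ι ι K} (hrow : M *ᵥ 1 = 1) (hcol : 1 ᵥ* M = 1) (hrank : M.rank ≤ 1) :
    M = averagingMatrix ι K := by
  have : Nonempty ι := Fintype.card_pos_iff.1 (Nat.pos_of_ne_zero fun h => by simp [h] at hn)
  have hrange : K ∙ (1 : ι → K) = LinearMap.range M.mulVecLin :=
    Submodule.eq_of_le_of_finrank_le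
      ((Submodule.span_singleton_le_iff_mem _ _).2 ⟨1, hrow⟩)
      (by rwa [finrank_span_singleton one_ne_zero])
  refine ext_of_mulVec_single fun j => ?_
  obtain ⟨c, hc⟩ := Submodule.mem_span_singleton.1
    (hrange ▸ LinearMap.mem_range_self M.mulVecLin (Pi.single j 1))
  have hsum : (Fintype.card ι : K) * c = ∑ i, Pi.single j (1 : K) i := by
    have := congrArg (1 ⬝ᵥ ·) hc
    simp only [mulVecLin_apply, dotProduct_mulVec, hcol] at this
    simpa [dotProduct, mul_comm] using this
  rw [averagingMatrix_mulVec, ← hsum, inv_mul_cancel_left₀ hn, hc, mulVecLin_apply]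

theorem charpoly_eq_of_eventually_pow_eq_averagingMatrix (hn : (Fintype.card ι : K) ≠ 0)
    {A : Matrix ι ι K} (hrow : A *ᵥ 1 = 1) (h : ∀ᶠ t in atTop, A ^ t = averagingMatrix ι K) :
    A.charpoly = X ^ (Fintype.card ι - 1) * (X - 1) := by
  obtain ⟨m, hm⟩ : ∃ m, Fintype.card ι = m + 1 :=
    Nat.exists_eq_succ_of_ne_zero fun h => by simp [h] at hn
  have : Nonempty ι := Fintype.card_pos_iff.1 (by omega)
  obtain ⟨t, hJ, ht⟩ := (h.and (eventually_ge_atTop (Fintype.card ι))).exists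
  have hsum := A.rank_pow_add_natTrailingDegree_charpoly ht
  have hrank := rank_averagingMatrix_le_one (ι := ι) (K := K)
  rw [hJ] at hsum
  rw [hm, Nat.add_sub_cancel]
  exact eq_X_pow_mul_X_sub_one A.charpoly_monic (by rw [charpoly_natDegree_eq_dim, hm])
    (by omega) (isRoot_charpoly_of_mulVec_eq_smul one_ne_zero (by rw [hrow, one_smul]))

theorem one_vecMul_eq_one_of_eventually_pow_eq_averagingMatrix (hn : (Fintype.card ι : K) ≠ 0)
    {A : Matrix ι ι K} (h : ∀ᶠ t in atTop, A ^ t = averagingMatrix ι K) : 1 ᵥ* A = 1 := by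
  obtain ⟨T, hT⟩ := eventually_atTop.1 h
  calc 1 ᵥ* A = (1 ᵥ* A ^ T) ᵥ* A := by rw [hT T le_rfl, one_vecMul_averagingMatrix hn]
    _ = 1 ᵥ* A ^ (T + 1) := by rw [vecMul_vecMul, pow_succ]
    _ = 1 := by rw [hT (T + 1) T.le_succ, one_vecMul_averagingMatrix hn]

theorem eventually_pow_eq_averagingMatrix (hn : (Fintype.card ι : K) ≠ 0) {A : Matrix ι ι K}
    (hrow : A *ᵥ 1 = 1) (hcol : 1 ᵥ* A = 1)
    (hchar : A.charpoly = X ^ (Fintype.card ι - 1) * (X - 1)) :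
    ∀ᶠ t in atTop, A ^ t = averagingMatrix ι K := by
  have htrail : A.charpoly.natTrailingDegree = Fintype.card ι - 1 := by
    rw [hchar, natTrailingDegree_mul (pow_ne_zero _ X_ne_zero)
      (by simpa using X_sub_C_ne_zero (1 : K))]
    simp
  filter_upwards [eventually_ge_atTop (Fintype.card ι)] with t ht
  have hsum := A.rank_pow_add_natTrailingDegree_charpoly ht
  exact eq_averagingMatrix_of_rank_le_one hn (pow_mulVec_eq_self hrow t)
    (vecMul_pow_eq_self hcol t) (by omega)

end Matrix

theorem finiteField_average_consensus_iff_general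
    (p n : ℕ) [Fact p.Prime] (hpn : ¬ p ∣ n)
    (A : Matrix (Fin n) (Fin n) (ZMod p))
    (hA : A *ᵥ (1 : Fin n → ZMod p) = 1) :
    (∀ x0 : Fin n → ZMod p, ∃ T : ℕ, ∀ t ≥ T,
      (A ^ t) *ᵥ x0 = ((n : ZMod p)⁻¹ * ∑ i, x0 i) • (1 : Fin n → ZMod p)) ↔
    (A.charpoly = X ^ (n - 1) * (X - 1) ∧
      (1 : Fin n → ZMod p) ᵥ* A = 1) := by
  have hn : (Fintype.card (Fin n) : ZMod p) ≠ 0 := by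
    rwa [Fintype.card_fin, Ne, ZMod.natCast_eq_zero_iff]
  have hconsensus : (∀ x0 : Fin n → ZMod p, ∃ T : ℕ, ∀ t ≥ T,
      (A ^ t) *ᵥ x0 = ((n : ZMod p)⁻¹ * ∑ i, x0 i) • (1 : Fin n → ZMod p)) ↔
      ∀ᶠ t in atTop, A ^ t = averagingMatrix (Fin n) (ZMod p) := by
    refine (forall_congr' fun x0 => ?_).trans forall_eventually_mulVec_eq_iff
    rw [averagingMatrix_mulVec, Fintype.card_fin, eventually_atTop]
  rw [hconsensus]
  constructor
  · intro h
    exact ⟨by simpa using charpoly_eq_of_eventually_pow_eq_averagingMatrix hn hA h,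
      one_vecMul_eq_one_of_eventually_pow_eq_averagingMatrix hn h⟩
  · rintro ⟨hchar, hcol⟩
    exact eventually_pow_eq_averagingMatrix hn hA hcol (by rwa [Fintype.card_fin])

/-- Finite-field average consensus: for a row-stochastic matrix `A` over
`ZMod p` with `p ∤ n`, the iteration achieves average consensus (every
trajectory reaches `((n)⁻¹ * ∑ᵢ x0 i) • 𝟙` in finite time) if and only if the
characteristic polynomial of `A` is `X^(n-1) * (X-1)` and `A` is
column-stochastic (`𝟙 ᵥ* A = 𝟙`). -/
theorem finiteField_average_consensus_iff
    (p n : ℕ) [Fact p.Prime] (hn : 1 ≤ n) (hpn : ¬ p ∣ n)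
    (A : Matrix (Fin n) (Fin n) (ZMod p))
    (hA : A *ᵥ (1 : Fin n → ZMod p) = 1) :
    (∀ x0 : Fin n → ZMod p, ∃ T : ℕ, ∀ t ≥ T,
      (A ^ t) *ᵥ x0 = ((n : ZMod p)⁻¹ * ∑ i, x0 i) • (1 : Fin n → ZMod p)) ↔
    (A.charpoly = X ^ (n - 1) * (X - 1) ∧
      (1 : Fin n → ZMod p) ᵥ* A = 1) :=
  finiteField_average_consensus_iff_general p n hpn A hA
end

section
/- Let p be a prime and n ≥ 1 with p not dividing n. Let A be an n×n matrix over F_p = ZMod p that achieves average consensus (A is row-stochastic, 𝟙ᵀ A = 𝟙ᵀ, and its characteristic polynomial is X^{n−1}(X−1)). Let B be an m×n matrix over F_p with B 𝟙 = 0, let L be an n×m matrix over F_p, and let η ∈ F_p^m be an arbitrary (possibly noisy) measurement vector. For an initial state x(0) ∈ F_p^n define the iteration x(t+1) = A x(t) + L η and the estimation error e(t) = η − B x(t). Then there exists T < n such that the estimation error is constant from time T onward: e(t) = e(T) for all t ≥ T. -/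
/-!
By Cayley–Hamilton `A ^ (n - 1) * (A - 1) = 0`, so every column of `A ^ (n - 1)` is a fixed
vector of `A`. Since `1` is a simple root of the characteristic polynomial, the fixed vectors of
`A` form a line, spanned by `𝟙`; as `B 𝟙 = 0` this gives `B A ^ t = 0` for `t ≥ n - 1`. The
increments of the affine iteration are `x (t + 1) - x t = A ^ t (x 1 - x 0)`, so `B x t` is
constant from `t = n - 1` on.
-/

open Matrix Polynomial Module

theorem Polynomial.rootMultiplicity_one_X_pow_mul_X_sub_one {R : Type*} [CommRing R] [IsDomain R]
    (k : ℕ) : (X ^ k * (X - 1) : R[X]).rootMultiplicity 1 = 1 := by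
  have hX : (X - 1 : R[X]) = X - C 1 := by rw [C_1]
  rw [hX, rootMultiplicity_mul (mul_ne_zero (pow_ne_zero _ X_ne_zero) (X_sub_C_ne_zero 1)),
    rootMultiplicity_X_sub_C_self, rootMultiplicity_eq_zero (by simp)]

theorem Matrix.exists_smul_eq_of_mulVec_eq_self {K ι : Type*} [Field K] [Fintype ι] [DecidableEq ι]
    {A : Matrix ι ι K} (hmult : A.charpoly.rootMultiplicity 1 ≤ 1) {u v : ι → K}
    (hu : A *ᵥ u = u) (hu0 : u ≠ 0) (hv : A *ᵥ v = v) : ∃ c : K, c • u = v := by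
  set E := End.eigenspace (toLin' A) 1
  have memE {w : ι → K} (hw : A *ᵥ w = w) : w ∈ E := by
    simpa [E, End.mem_eigenspace_iff] using hw
  have hE : finrank K E = 1 := by
    refine le_antisymm ((LinearMap.finrank_eigenspace_le _ 1).trans ?_) ?_
    · rwa [charpoly_toLin']
    · exact Submodule.one_le_finrank_iff.mpr ((Submodule.ne_bot_iff E).mpr ⟨u, memE hu, hu0⟩)
  obtain ⟨c, hc⟩ := (finrank_eq_one_iff_of_nonzero' (⟨u, memE hu⟩ : E) (by simpa using hu0)).mp hE
    ⟨v, memE hv⟩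
  exact ⟨c, congrArg Subtype.val hc⟩

theorem Matrix.mul_pow_eq_zero_of_charpoly_eq {K ι κ : Type*} [Field K] [Fintype ι] [DecidableEq ι]
    {A : Matrix ι ι K} {k : ℕ} (hchar : A.charpoly = X ^ k * (X - 1))
    (hrow : A *ᵥ 1 = 1) {B : Matrix κ ι K} (hB : B *ᵥ 1 = 0) : B * A ^ k = 0 := by
  rcases isEmpty_or_nonempty ι with _ | _
  · exact Subsingleton.elim _ _
  have hfix : A * A ^ k = A ^ k := by
    have hCH : A ^ k * (A - 1) = 0 := by
      simpa [hchar] using A.aeval_self_charpoly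
    rw [← pow_succ', pow_succ, ← sub_eq_zero, ← mul_sub_one, hCH]
  have hmult : A.charpoly.rootMultiplicity 1 ≤ 1 := by
    rw [hchar, Polynomial.rootMultiplicity_one_X_pow_mul_X_sub_one]
  refine ext_of_mulVec_single fun j => ?_
  obtain ⟨c, hc⟩ := exists_smul_eq_of_mulVec_eq_self hmult hrow one_ne_zero
    (v := A ^ k *ᵥ Pi.single j 1) (by rw [mulVec_mulVec, hfix])
  rw [← mulVec_mulVec, ← hc, mulVec_smul, hB, smul_zero, zero_mulVec]

theorem Matrix.sub_eq_pow_mulVec_of_affine {R ι : Type*} [CommRing R] [Fintype ι] [DecidableEq ι]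
    {A : Matrix ι ι R} {b : ι → R} {x : ℕ → ι → R} (hx : ∀ t, x (t + 1) = A *ᵥ x t + b) (t : ℕ) :
    x (t + 1) - x t = A ^ t *ᵥ (x 1 - x 0) := by
  induction t with
  | zero => simp
  | succ t ih =>
    rw [pow_succ', ← mulVec_mulVec, ← ih, mulVec_sub, hx (t + 1), hx t]
    abel

theorem Matrix.mulVec_eq_of_affine_of_mul_pow_eq_zero {R ι κ : Type*} [CommRing R] [Fintype ι]
    [DecidableEq ι] {A : Matrix ι ι R} {b : ι → R} {x : ℕ → ι → R}
    (hx : ∀ t, x (t + 1) = A *ᵥ x t + b) {B : Matrix κ ι R} {T : ℕ} (hB : B * A ^ T = 0) :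
    ∀ t ≥ T, B *ᵥ x t = B *ᵥ x T := by
  intro t ht
  induction t, ht using Nat.le_induction with
  | base => rfl
  | succ t ht ih =>
    have hstep : B *ᵥ (x (t + 1) - x t) = 0 := by
      rw [sub_eq_pow_mulVec_of_affine hx, ← Nat.add_sub_cancel' ht, pow_add, ← mulVec_mulVec,
        mulVec_mulVec _ B, hB, zero_mulVec]
    rw [← ih, ← sub_eq_zero, ← mulVec_sub, hstep]

theorem finiteField_pose_estimation_noisy_general
    (p n m : ℕ) [Fact p.Prime] (hn : 1 ≤ n)
    (A : Matrix (Fin n) (Fin n) (ZMod p))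
    (hrow : A *ᵥ (1 : Fin n → ZMod p) = 1)
    (hchar : A.charpoly = X ^ (n - 1) * (X - 1))
    (B : Matrix (Fin m) (Fin n) (ZMod p))
    (hB : B *ᵥ (1 : Fin n → ZMod p) = 0)
    (L : Matrix (Fin n) (Fin m) (ZMod p))
    (η : Fin m → ZMod p)
    (x : ℕ → Fin n → ZMod p)
    (hx : ∀ t : ℕ, x (t + 1) = A *ᵥ x t + L *ᵥ η) :
    ∃ T : ℕ, T < n ∧ ∀ t ≥ T, η - B *ᵥ x t = η - B *ᵥ x T := by
  have hBA : B * A ^ (n - 1) = 0 := mul_pow_eq_zero_of_charpoly_eq hchar hrow hB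
  refine ⟨n - 1, by omega, fun t ht => ?_⟩
  rw [mulVec_eq_of_affine_of_mul_pow_eq_zero hx hBA t ht]

/-- Distributed pose estimation with noisy measurements: if `A` achieves
average consensus over `ZMod p` (row-stochastic, column-stochastic, with
characteristic polynomial `X^(n-1)(X-1)`) and `B 𝟙 = 0`, then for any
measurement vector `η` the estimation error `e(t) = η - B x(t)` of the
iteration `x(t+1) = A x(t) + L η` becomes constant after a finite time
`T < n`. -/
theorem finiteField_pose_estimation_noisy
    (p n m : ℕ) [Fact p.Prime] (hn : 1 ≤ n) (hpn : ¬ p ∣ n)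
    (A : Matrix (Fin n) (Fin n) (ZMod p))
    (hrow : A *ᵥ (1 : Fin n → ZMod p) = 1)
    (hcol : (1 : Fin n → ZMod p) ᵥ* A = 1)
    (hchar : A.charpoly = X ^ (n - 1) * (X - 1))
    (B : Matrix (Fin m) (Fin n) (ZMod p))
    (hB : B *ᵥ (1 : Fin n → ZMod p) = 0)
    (L : Matrix (Fin n) (Fin m) (ZMod p))
    (η : Fin m → ZMod p)
    (x : ℕ → Fin n → ZMod p)
    (hx : ∀ t : ℕ, x (t + 1) = A *ᵥ x t + L *ᵥ η) :
    ∃ T : ℕ, T < n ∧ ∀ t ≥ T, η - B *ᵥ x t = η - B *ᵥ x T :=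
  finiteField_pose_estimation_noisy_general p n m hn A hrow hchar B hB L η x hx
end
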